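/- Let (Ω, F, P, θ) be a stationary ergodic quadruple carrying σ, τ as in the context and let p ≥ 1. Then any measurable, almost surely finite Ō_p-valued random vector U satisfying U∘θ = H^p(U) P-a.s. satisfies P( U(p) ≤ σ·1_{U(1)=0} ) > 0. -/

import Mathlib

open MeasureTheory ProbabilityTheory Filter

noncomputable section

/-- Positive part `[x]⁺ = max(x,0)`. -/
def pos (x : ℝ) : ℝ := max x 0

/-- Nondecreasing rearrangement of a finite real vector. -/
def sortVec {n : ℕ} (u : Fin n → ℝ) : Fin n → ℝ := u ∘ Tuple.sort u

/-- `u` belongs to `Ō_n`: nonnegative and nondecreasing coordinates. -/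
def OSorted {n : ℕ} (u : Fin n → ℝ) : Prop := (∀ i, 0 ≤ u i) ∧ Monotone u

/-- Two-sided iterates `θ^n`, `n ∈ ℤ`, of a measurable bijection. -/
def iterZ {Ω : Type*} [MeasurableSpace Ω] (θ : Ω ≃ᵐ Ω) : ℤ → Ω → Ω
  | Int.ofNat n => (⇑θ)^[n]
  | Int.negSucc n => (⇑θ.symm)^[n + 1]

/-- The term `σ∘θ^{-k} − Σ_{i=1}^k τ∘θ^{-i}` (here `θinv = θ⁻¹`). -/
def Zterm {Ω : Type*} (θinv : Ω → Ω) (σ τ : Ω → ℝ) (k : ℕ) (ω : Ω) : ℝ :=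
  σ (θinv^[k] ω) - ∑ i ∈ Finset.Icc 1 k, τ (θinv^[i] ω)

/-- `Z_ℓ = [sup_{k ≥ ℓ} (σ∘θ^{-k} − Σ_{i=1}^k τ∘θ^{-i})]⁺`. -/
def Zfam {Ω : Type*} (θinv : Ω → Ω) (σ τ : Ω → ℝ) (ℓ : ℕ) (ω : Ω) : ℝ :=
  pos (⨆ k : {k : ℕ // ℓ ≤ k}, Zterm θinv σ τ (k : ℕ) ω)

/-- GI/GI input: the doubly infinite sequences `(σ∘θ^n)` and `(τ∘θ^n)` are
jointly independent, and each is identically distributed. -/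
def GIGI {Ω : Type*} [MeasurableSpace Ω] (μ : Measure Ω) (θ : Ω ≃ᵐ Ω) (σ τ : Ω → ℝ) : Prop :=
  iIndepFun
    (fun x : ℤ × Bool => fun ω => if x.2 then σ (iterZ θ x.1 ω) else τ (iterZ θ x.1 ω)) μ
  ∧ (∀ n : ℤ, IdentDistrib (fun ω => σ (iterZ θ n ω)) σ μ μ)
  ∧ (∀ n : ℤ, IdentDistrib (fun ω => τ (iterZ θ n ω)) τ μ μ)

/-- The distribution of `τ` has unbounded support. -/
def UnboundedSupport {Ω : Type*} [MeasurableSpace Ω] (μ : Measure Ω) (τ : Ω → ℝ) : Prop :=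
  ∀ M : ℝ, 0 < M → 0 < μ {ω | M < τ ω}

/-- The Kiefer–Wolfowitz map `G(u) = sorted [u + σe₁ − τ𝟙]⁺`. -/
def Gmap (S : ℕ) (σ τ : ℝ) (u : Fin S → ℝ) : Fin S → ℝ :=
  sortVec fun i => pos (u i + (if (i : ℕ) = 0 then σ else 0) - τ)

/-- The map `G^p` driving the J_{p+1}SW service profile. -/
def Gp (S p : ℕ) (hS : 0 < S) (σ τ : ℝ) (u : Fin S → ℝ) : Fin S → ℝ :=
  if u ⟨0, hS⟩ = 0 then Gmap S σ τ u
  else sortVec fun i => pos (u i + (if (i : ℕ) = p then σ else 0) - τ)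

/-- The map `Γ^p`. -/
def Gamma (p : ℕ) (σ τ : ℝ) (u : Fin p → ℝ) : Fin p → ℝ := fun j =>
  if h : (j : ℕ) + 1 < p then pos (u ⟨(j : ℕ) + 1, h⟩ - τ) else pos (max (u j) σ - τ)

/-- The map `Ψ^p`. -/
def Psi (p : ℕ) (σ τ : ℝ) (u : Fin p → ℝ) : Fin p → ℝ := fun j =>
  if h : (j : ℕ) + 1 < p then pos (min (max (u j) σ) (u ⟨(j : ℕ) + 1, h⟩) - τ)
  else pos (max (u j) σ - τ)

/-- The map `Φ^p` on `Ō_S` (with `1 ≤ p < S`). -/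
def Phi (S p : ℕ) (hp : p < S) (σ τ : ℝ) (u : Fin S → ℝ) : Fin S → ℝ := fun j =>
  let ind : ℝ := if 0 < u ⟨0, Nat.lt_of_le_of_lt (Nat.zero_le p) hp⟩ then u ⟨p, hp⟩ else 0
  if h : (j : ℕ) + 1 < S then
    if (j : ℕ) < p then pos (min (max (u j) σ) (u ⟨(j : ℕ) + 1, h⟩) - τ)
    else pos (min (max (u j) (σ + ind)) (u ⟨(j : ℕ) + 1, h⟩) - τ)
  else pos (max (u j) (σ + ind) - τ)

/-- The loss-system map `H^p(u) = sorted [u + σ·1_{u(1)=0}e₁ − τ𝟙]⁺`. -/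
def Hmap (p : ℕ) (hp : 0 < p) (σ τ : ℝ) (u : Fin p → ℝ) : Fin p → ℝ :=
  sortVec fun i => pos (u i + (if (i : ℕ) = 0 ∧ u ⟨0, hp⟩ = 0 then σ else 0) - τ)

end

/-!
Suppose the event has probability zero. Then almost surely the largest coordinate `M = U(p)`
exceeds `σ·1_{U(1)=0} ≥ 0`, so `σ` is never added to it and every coordinate of `H^p(U)` is at
most `[M − τ]⁺ < M`: that is, `M ∘ θ < M` almost surely. But a function that does not increase
along a measure-preserving map of a finite measure is almost surely invariant, a contradiction.
-/

namespace MeasureTheory.MeasurePreserving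

variable {α : Type*} [MeasurableSpace α] {μ : Measure α} [IsFiniteMeasure μ] {f : α → α}

/-- The sublevel sets `{g ≤ q}` are a.e. contained in their preimages and have the same measure,
so they are a.e. invariant; comparing `g ∘ f` and `g` through rational levels gives equality. -/
theorem comp_ae_eq_of_comp_ae_le (hf : MeasurePreserving f μ μ) {g : α → ℝ} (hg : Measurable g)
    (hle : g ∘ f ≤ᵐ[μ] g) : g ∘ f =ᵐ[μ] g := by
  have hlevel : ∀ q : ℚ, f ⁻¹' {x | g x ≤ q} =ᵐ[μ] {x | g x ≤ q} := fun q =>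
    (ae_eq_of_ae_subset_of_measure_ge
      (hle.mono fun x hx (hxq : g x ≤ q) => (hx.trans hxq : g (f x) ≤ q))
      (hf.measure_preimage (measurableSet_le hg measurable_const).nullMeasurableSet).le
      (measurableSet_le hg measurable_const).nullMeasurableSet (measure_ne_top μ _)).symm
  filter_upwards [ae_all_iff.2 hlevel] with x hx
  have hiff : ∀ q : ℚ, g (f x) ≤ q ↔ g x ≤ q := fun q => Iff.of_eq (hx q)
  refine le_antisymm ?_ ?_ <;> refine le_of_forall_rat_lt_imp_le fun q hq => ?_ <;> by_contra! h
  · exact hq.not_ge ((hiff q).2 h.le)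
  · exact hq.not_ge ((hiff q).1 h.le)

end MeasureTheory.MeasurePreserving

lemma Hmap_lt_last {p : ℕ} (hp : 0 < p) {σ τ : ℝ} {u : Fin p → ℝ} (hu : Monotone u)
    (hσ : 0 ≤ σ) (hτ : 0 < τ) (hlast : (if u ⟨0, hp⟩ = 0 then σ else 0) < u ⟨p - 1, by omega⟩)
    (k : Fin p) : Hmap p hp σ τ u k < u ⟨p - 1, by omega⟩ := by
  obtain ⟨j, hj⟩ : ∃ j, Hmap p hp σ τ u k =
      pos (u j + (if (j : ℕ) = 0 ∧ u ⟨0, hp⟩ = 0 then σ else 0) - τ) := ⟨_, rfl⟩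
  have hpos : 0 < u ⟨p - 1, by omega⟩ := by
    refine lt_of_le_of_lt ?_ hlast
    split_ifs <;> simp [hσ]
  have hle : u j + (if (j : ℕ) = 0 ∧ u ⟨0, hp⟩ = 0 then σ else 0) ≤ u ⟨p - 1, by omega⟩ := by
    by_cases hc : (j : ℕ) = 0 ∧ u ⟨0, hp⟩ = 0
    · rw [if_pos hc, show j = ⟨0, hp⟩ from Fin.ext hc.1, hc.2, zero_add]
      rw [if_pos hc.2] at hlast
      exact hlast.le
    · rw [if_neg hc, add_zero]
      exact hu (Fin.le_iff_val_le_val.2 (Nat.le_sub_one_of_lt j.isLt))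
  rw [hj]
  exact max_lt (by linarith) hpos

theorem stmt18 {Ω : Type*} [MeasurableSpace Ω] (μ : MeasureTheory.Measure Ω)
    [MeasureTheory.IsProbabilityMeasure μ]
    (θ : Ω ≃ᵐ Ω) (hergo : Ergodic (⇑θ) μ)
    (σ τ : Ω → ℝ)
    (hσ0 : ∀ᵐ ω ∂μ, 0 ≤ σ ω) (hτ0 : ∀ᵐ ω ∂μ, 0 < τ ω)
    (p : ℕ) (hp : 1 ≤ p)
    (U : Ω → Fin p → ℝ) (hUm : Measurable U) (hUs : ∀ᵐ ω ∂μ, OSorted (U ω))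
    (hUr : ∀ᵐ ω ∂μ, U (θ ω) = Hmap p (by omega) (σ ω) (τ ω) (U ω)) :
    0 < μ {ω | U ω ⟨p - 1, by omega⟩ ≤ (if U ω ⟨0, by omega⟩ = 0 then σ ω else 0)} := by
  set M : Ω → ℝ := fun ω => U ω ⟨p - 1, by omega⟩
  refine pos_iff_ne_zero.2 fun hnull => ?_
  have hlast : ∀ᵐ ω ∂μ, (if U ω ⟨0, by omega⟩ = 0 then σ ω else 0) < M ω :=
    measure_eq_zero_iff_ae_notMem.1 hnull |>.mono fun _ h => not_le.1 h
  have hdecr : ∀ᵐ ω ∂μ, M (θ ω) < M ω := by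
    filter_upwards [hUr, hUs, hσ0, hτ0, hlast] with ω hr hs hσ hτ hl
    simpa only [M, hr] using Hmap_lt_last _ hs.2 hσ hτ hl _
  have hinv : M ∘ θ =ᵐ[μ] M :=
    hergo.toMeasurePreserving.comp_ae_eq_of_comp_ae_le ((measurable_pi_apply _).comp hUm)
      (hdecr.mono fun _ h => h.le)
  obtain ⟨ω, hlt, heq⟩ := (hdecr.and hinv).exists
  exact hlt.ne heq
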